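/- arXiv:0904.0538 — 2 statements merged into one kernel-verified Lean document; each statement's English description precedes it below -/
import Mathlib

section
/- Let 0 < α ≤ β ≤ 1 and let {X_{k,l}, k,l ≥ 0} be i.i.d. real random variables with X a generic copy. If n P(|X| > n) → 0 as n → ∞ and E X = μ exists and is finite, then (1/(A_m^α A_n^β)) Σ_{k=0}^m Σ_{l=0}^n A_{m-k}^{α-1} A_{n-l}^{β-1} X_{k,l} → μ in probability as m, n → ∞ (i.e., as min(m,n) → ∞). -/
open MeasureTheory ProbabilityTheory Filter Finset Topology

/-- `cesaroA α n` is the Cesàro coefficient `A_n^α = (α+1)(α+2)⋯(α+n)/n!`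
(with `A_0^α = 1`). Note that this also gives `A_n^{-1} = 0` for `n ≥ 1`. -/
noncomputable def cesaroA (α : ℝ) (n : ℕ) : ℝ :=
  ∏ j ∈ Finset.range n, (α + (j + 1)) / (j + 1)

/-!
The normalised Cesàro weights `A_{m-k}^{α-1} A_{n-l}^{β-1} / (A_m^α A_n^β)` are nonnegative, sum
to one by Pascal's rule `A_{n+1}^{γ+1} = A_n^{γ+1} + A_{n+1}^γ`, and each is at most
`1 / (A_m^α A_n^β)`, which tends to `0` because `A_n^γ ≥ 1 + γ (1 + 1/2 + ⋯ + 1/n)`.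
So this is a weak law for weighted sums with vanishing maximal weight `c`. Truncating at a fixed
level `A`, the tails contribute at most `4 E|X - X^A| / ε` by Markov's inequality, and the
truncated part has variance at most `c A²` by pairwise independence, hence contributes at most
`4 c A² / ε²` by Chebyshev's inequality. Choose `A` large first, then the indices.
-/

lemma one_add_sum_le_prod_one_add {ι : Type*} (s : Finset ι) {x : ι → ℝ}
    (hx : ∀ i ∈ s, 0 ≤ x i) : 1 + ∑ i ∈ s, x i ≤ ∏ i ∈ s, (1 + x i) := by
  classical
  induction s using Finset.induction_on with
  | empty => simp
  | insert a s ha ih =>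
    rw [sum_insert ha, prod_insert ha]
    have hxa := hx a (mem_insert_self a s)
    have hs := ih fun i hi => hx i (mem_insert_of_mem hi)
    have hsum : 0 ≤ ∑ i ∈ s, x i := sum_nonneg fun i hi => hx i (mem_insert_of_mem hi)
    nlinarith

lemma cesaroA_zero (γ : ℝ) : cesaroA γ 0 = 1 := prod_range_zero _

lemma cesaroA_succ (γ : ℝ) (n : ℕ) :
    cesaroA γ (n + 1) = cesaroA γ n * ((γ + (n + 1)) / (n + 1)) :=
  prod_range_succ _ n

lemma cesaroA_pos {γ : ℝ} (hγ : -1 < γ) (n : ℕ) : 0 < cesaroA γ n :=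
  prod_pos fun j _ => div_pos (by linarith [j.cast_nonneg (α := ℝ)]) (by positivity)

lemma cesaroA_le_one {γ : ℝ} (hγ₁ : -1 ≤ γ) (hγ₀ : γ ≤ 0) (n : ℕ) : cesaroA γ n ≤ 1 :=
  prod_le_one (fun j _ => div_nonneg (by linarith [j.cast_nonneg (α := ℝ)]) (by positivity))
    fun j _ => (div_le_one (by positivity)).2 (by linarith)

lemma succ_mul_cesaroA_succ (γ : ℝ) (n : ℕ) :
    (n + 1 : ℝ) * cesaroA γ (n + 1) = (γ + 1) * cesaroA (γ + 1) n := by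
  induction n with
  | zero => simp [cesaroA_succ, cesaroA_zero]
  | succ n ih =>
    rw [cesaroA_succ γ (n + 1), cesaroA_succ (γ + 1) n, ← mul_assoc (γ + 1), ← ih]
    have hn : (n : ℝ) + 1 ≠ 0 := by positivity
    push_cast
    field_simp
    ring

lemma cesaroA_add_one_succ (γ : ℝ) (n : ℕ) :
    cesaroA (γ + 1) (n + 1) = cesaroA (γ + 1) n + cesaroA γ (n + 1) := by
  have h := succ_mul_cesaroA_succ γ n
  rw [cesaroA_succ]
  field_simp
  linear_combination -h

lemma sum_range_cesaroA (γ : ℝ) (n : ℕ) :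
    ∑ j ∈ range (n + 1), cesaroA γ j = cesaroA (γ + 1) n := by
  induction n with
  | zero => simp [cesaroA_zero]
  | succ n ih => rw [sum_range_succ, ih, cesaroA_add_one_succ]

lemma tendsto_cesaroA_atTop {γ : ℝ} (hγ : 0 < γ) : Tendsto (cesaroA γ) atTop atTop := by
  have hharmonic (n : ℕ) : 1 + γ * ∑ j ∈ range n, (1 : ℝ) / (j + 1) ≤ cesaroA γ n := by
    have h := one_add_sum_le_prod_one_add (range n) (x := fun j : ℕ => γ / (j + 1))
      fun j _ => by positivity
    convert h using 1
    · rw [mul_sum]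
      simp only [mul_one_div]
    · refine prod_congr rfl fun j _ => ?_
      field_simp
      ring
  refine tendsto_atTop_mono hharmonic (tendsto_atTop_add_const_left _ _ ?_)
  exact Real.tendsto_sum_range_one_div_nat_succ_atTop.const_mul_atTop hγ

noncomputable def cesaroWeight (γ : ℝ) (m k : ℕ) : ℝ :=
  cesaroA (γ - 1) (m - k) / cesaroA γ m

section CesaroWeight

variable {γ : ℝ} (hγ : 0 < γ) (m : ℕ)
include hγ

lemma cesaroWeight_nonneg (k : ℕ) : 0 ≤ cesaroWeight γ m k :=
  div_nonneg (cesaroA_pos (by linarith) _).le (cesaroA_pos (by linarith) _).le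

lemma sum_cesaroWeight : ∑ k ∈ range (m + 1), cesaroWeight γ m k = 1 := by
  have hrev := sum_range_reflect (fun j => cesaroA (γ - 1) j) (m + 1)
  simp only [Nat.add_sub_cancel] at hrev
  simp only [cesaroWeight]
  rw [← sum_div, hrev, sum_range_cesaroA, sub_add_cancel,
    div_self (cesaroA_pos (by linarith) m).ne']

lemma cesaroWeight_le_inv (hγ₁ : γ ≤ 1) (k : ℕ) : cesaroWeight γ m k ≤ (cesaroA γ m)⁻¹ := by
  rw [cesaroWeight, div_eq_mul_inv]
  exact mul_le_of_le_one_left (inv_pos.2 (cesaroA_pos (by linarith) m)).le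
    (cesaroA_le_one (by linarith) (by linarith) _)

end CesaroWeight

section WeightedSums

variable {Ω ι : Type*} {mΩ : MeasurableSpace Ω} {μ : Measure Ω} {s : Finset ι} {w : ι → ℝ}

lemma abs_sub_truncation_le (f : Ω → ℝ) (A : ℝ) (x : Ω) : |f x - truncation f A x| ≤ |f x| := by
  simp only [truncation, Set.indicator, Function.comp_apply, id]
  split_ifs <;> simp

lemma tendsto_integral_abs_sub_truncation {f : Ω → ℝ} (hf : Integrable f μ) :
    Tendsto (fun A => ∫ x, |f x - truncation f A x| ∂μ) atTop (𝓝 0) := by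
  have hlim := tendsto_integral_filter_of_dominated_convergence (μ := μ) (l := atTop)
    (F := fun A x => |f x - truncation f A x|) (f := fun _ => 0) (fun x => |f x|)
    (Eventually.of_forall fun A => (hf.1.sub hf.1.truncation).norm)
    (Eventually.of_forall fun A => Eventually.of_forall fun x => by
      simpa only [Real.norm_eq_abs, abs_abs] using abs_sub_truncation_le f A x)
    hf.abs
    (Eventually.of_forall fun x => tendsto_const_nhds.congr' <| by
      filter_upwards [Ioi_mem_atTop |f x|] with A hA
      rw [truncation_eq_self hA, sub_self, abs_zero])
  simpa using hlim

lemma integral_weighted_sum_of_identDistrib {f : ι → Ω → ℝ} {f₀ : Ω → ℝ}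
    (hident : ∀ i ∈ s, IdentDistrib (f i) f₀ μ μ) (hint : Integrable f₀ μ)
    (hw₁ : ∑ i ∈ s, w i = 1) :
    ∫ ω, ∑ i ∈ s, w i * f i ω ∂μ = ∫ ω, f₀ ω ∂μ := by
  rw [integral_finsetSum s fun i hi => ((hident i hi).integrable_iff.2 hint).const_mul (w i)]
  simp_rw [integral_const_mul]
  rw [sum_congr rfl fun i hi => by rw [(hident i hi).integral_eq], ← sum_mul, hw₁, one_mul]

lemma variance_weighted_sum_le {Y : ι → Ω → ℝ} {c V : ℝ} (hY : ∀ i ∈ s, MemLp (Y i) 2 μ)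
    (hindep : Set.Pairwise s fun i j => Y i ⟂ᵢ[μ] Y j) (hV : ∀ i ∈ s, variance (Y i) μ ≤ V)
    (hw₀ : ∀ i ∈ s, 0 ≤ w i) (hwc : ∀ i ∈ s, w i ≤ c) (hw₁ : ∑ i ∈ s, w i = 1) :
    variance (fun ω => ∑ i ∈ s, w i * Y i ω) μ ≤ c * V := by
  have hsum : (fun ω => ∑ i ∈ s, w i * Y i ω) = ∑ i ∈ s, w i • Y i := by
    ext ω; simp [Finset.sum_apply]
  rw [hsum, IndepFun.variance_sum (fun i hi => (hY i hi).const_smul (w i))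
    fun i hi j hj hij => (hindep hi hj hij).comp (measurable_const_mul (w i))
      (measurable_const_mul (w j))]
  calc ∑ i ∈ s, variance (w i • Y i) μ = ∑ i ∈ s, w i * (w i * variance (Y i) μ) :=
        sum_congr rfl fun i _ => by rw [variance_smul]; ring
    _ ≤ ∑ i ∈ s, w i * (c * V) := by
        refine sum_le_sum fun i hi => mul_le_mul_of_nonneg_left ?_ (hw₀ i hi)
        exact mul_le_mul (hwc i hi) (hV i hi) (variance_nonneg _ _)
          ((hw₀ i hi).trans (hwc i hi))
    _ = c * V := by rw [← sum_mul, hw₁, one_mul]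

lemma abs_weighted_sum_sub_le (hw₀ : ∀ i ∈ s, 0 ≤ w i) (x y : ι → ℝ) (a b : ℝ) :
    |∑ i ∈ s, w i * x i - a| ≤
      (∑ i ∈ s, w i * |x i - y i| + |b - a|) + |∑ i ∈ s, w i * y i - b| := by
  have hsplit : ∑ i ∈ s, w i * x i - a =
      ∑ i ∈ s, w i * (x i - y i) + (b - a) + (∑ i ∈ s, w i * y i - b) := by
    simp only [mul_sub, sum_sub_distrib]; ring
  have htail : |∑ i ∈ s, w i * (x i - y i)| ≤ ∑ i ∈ s, w i * |x i - y i| :=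
    (abs_sum_le_sum_abs _ _).trans_eq <| sum_congr rfl fun i hi => by
      rw [abs_mul, abs_of_nonneg (hw₀ i hi)]
  rw [hsplit]
  linarith [abs_add_three (∑ i ∈ s, w i * (x i - y i)) (b - a) (∑ i ∈ s, w i * y i - b)]

lemma variance_truncation_le [IsProbabilityMeasure μ] {f : Ω → ℝ}
    (hf : AEStronglyMeasurable f μ) (A : ℝ) : variance (truncation f A) μ ≤ A ^ 2 := by
  refine (variance_le_expectation_sq hf.truncation).trans ?_
  calc ∫ x, (truncation f A ^ 2) x ∂μ ≤ ∫ _, A ^ 2 ∂μ :=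
        integral_mono hf.memLp_truncation.integrable_sq (integrable_const _) fun x =>
          sq_le_sq.2 (abs_truncation_le_bound f A x)
    _ = A ^ 2 := by simp

lemma measureReal_weighted_sum_abs_sub_truncation_ge_le [IsProbabilityMeasure μ]
    {X : ι → Ω → ℝ} {X₀ : Ω → ℝ} (hident : ∀ i ∈ s, IdentDistrib (X i) X₀ μ μ)
    (hint : Integrable X₀ μ) (hw₀ : ∀ i ∈ s, 0 ≤ w i) (hw₁ : ∑ i ∈ s, w i = 1) (A : ℝ) {δ : ℝ}
    (hδ : 0 < δ) :
    μ.real {ω | δ ≤ ∑ i ∈ s, w i * |X i ω - truncation (X i) A ω| +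
        ∫ x, |X₀ x - truncation X₀ A x| ∂μ} ≤
      2 * (∫ x, |X₀ x - truncation X₀ A x| ∂μ) / δ := by
  set τ := ∫ x, |X₀ x - truncation X₀ A x| ∂μ
  have htail_ident : ∀ i ∈ s, IdentDistrib (fun ω => |X i ω - truncation (X i) A ω|)
      (fun ω => |X₀ ω - truncation X₀ A ω|) μ μ := fun i hi =>
    (hident i hi).comp (measurable_id.sub (measurable_id.indicator measurableSet_Ioc)).abs
  have htail_int : Integrable (fun ω => |X₀ ω - truncation X₀ A ω|) μ :=
    (hint.sub hint.1.integrable_truncation).abs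
  have hsum_int : Integrable (fun ω => ∑ i ∈ s, w i * |X i ω - truncation (X i) A ω|) μ :=
    integrable_finsetSum s fun i hi =>
      ((htail_ident i hi).integrable_iff.2 htail_int).const_mul (w i)
  have hmean : ∫ ω, (∑ i ∈ s, w i * |X i ω - truncation (X i) A ω| + τ) ∂μ = 2 * τ := by
    rw [integral_add hsum_int (integrable_const τ),
      integral_weighted_sum_of_identDistrib htail_ident htail_int hw₁, integral_const,
      probReal_univ, one_smul, two_mul]
  have hmarkov := mul_meas_ge_le_integral_of_nonneg
    (Eventually.of_forall fun ω => add_nonneg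
      (sum_nonneg fun i hi => mul_nonneg (hw₀ i hi) (abs_nonneg _))
      (integral_nonneg fun x => abs_nonneg _))
    (hsum_int.add (integrable_const τ)) δ
  rw [hmean] at hmarkov
  rw [le_div_iff₀ hδ]
  linarith

lemma measureReal_abs_weighted_sum_truncation_sub_ge_le [IsProbabilityMeasure μ]
    {X : ι → Ω → ℝ} {X₀ : Ω → ℝ} {c : ℝ} (hindep : Set.Pairwise s fun i j => X i ⟂ᵢ[μ] X j)
    (hident : ∀ i ∈ s, IdentDistrib (X i) X₀ μ μ) (hint : Integrable X₀ μ)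
    (hw₀ : ∀ i ∈ s, 0 ≤ w i) (hwc : ∀ i ∈ s, w i ≤ c) (hw₁ : ∑ i ∈ s, w i = 1) (A : ℝ)
    {δ : ℝ} (hδ : 0 < δ) :
    μ.real {ω | δ ≤ |∑ i ∈ s, w i * truncation (X i) A ω - ∫ x, truncation X₀ A x ∂μ|} ≤
      c * A ^ 2 / δ ^ 2 := by
  have hmeas : ∀ i ∈ s, AEStronglyMeasurable (X i) μ := fun i hi =>
    ((hident i hi).integrable_iff.2 hint).1
  have hmean : ∫ ω, ∑ i ∈ s, w i * truncation (X i) A ω ∂μ = ∫ x, truncation X₀ A x ∂μ :=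
    integral_weighted_sum_of_identDistrib (fun i hi => (hident i hi).truncation)
      hint.1.integrable_truncation hw₁
  have hvar : variance (fun ω => ∑ i ∈ s, w i * truncation (X i) A ω) μ ≤ c * A ^ 2 :=
    variance_weighted_sum_le (fun i hi => (hmeas i hi).memLp_truncation)
      (fun i hi j hj hij => (hindep hi hj hij).comp (measurable_id.indicator measurableSet_Ioc)
        (measurable_id.indicator measurableSet_Ioc))
      (fun i hi => variance_truncation_le (hmeas i hi) A) hw₀ hwc hw₁
  have hmemLp : MemLp (fun ω => ∑ i ∈ s, w i * truncation (X i) A ω) 2 μ :=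
    memLp_finsetSum s fun i hi => (hmeas i hi).memLp_truncation.const_mul (w i)
  have hcheb := meas_ge_le_variance_div_sq hmemLp hδ
  rw [hmean] at hcheb
  exact (ENNReal.toReal_le_of_le_ofReal
    (div_nonneg (variance_nonneg _ _) (sq_nonneg δ)) hcheb).trans (by gcongr)

lemma measureReal_abs_weighted_sum_sub_integral_ge_le [IsProbabilityMeasure μ] {X : ι → Ω → ℝ}
    {X₀ : Ω → ℝ} {c : ℝ} (hindep : Set.Pairwise s fun i j => X i ⟂ᵢ[μ] X j)
    (hident : ∀ i ∈ s, IdentDistrib (X i) X₀ μ μ) (hint : Integrable X₀ μ)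
    (hw₀ : ∀ i ∈ s, 0 ≤ w i) (hwc : ∀ i ∈ s, w i ≤ c) (hw₁ : ∑ i ∈ s, w i = 1)
    (A : ℝ) {ε : ℝ} (hε : 0 < ε) :
    μ.real {ω | ε ≤ |∑ i ∈ s, w i * X i ω - ∫ x, X₀ x ∂μ|} ≤
      4 / ε * ∫ x, |X₀ x - truncation X₀ A x| ∂μ + 4 * c * A ^ 2 / ε ^ 2 := by
  set τ := ∫ x, |X₀ x - truncation X₀ A x| ∂μ
  have hmean_gap : |∫ x, truncation X₀ A x ∂μ - ∫ x, X₀ x ∂μ| ≤ τ := by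
    rw [← integral_sub hint.1.integrable_truncation hint]
    exact abs_integral_le_integral_abs.trans_eq
      (integral_congr_ae (Eventually.of_forall fun x => abs_sub_comm _ _))
  have hsub : {ω | ε ≤ |∑ i ∈ s, w i * X i ω - ∫ x, X₀ x ∂μ|} ⊆
      {ω | ε / 2 ≤ ∑ i ∈ s, w i * |X i ω - truncation (X i) A ω| + τ} ∪
        {ω | ε / 2 ≤ |∑ i ∈ s, w i * truncation (X i) A ω - ∫ x, truncation X₀ A x ∂μ|} := by
    intro ω hω
    by_contra hout
    simp only [Set.mem_union, Set.mem_ofPred_eq, not_or, not_le] at hω hout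
    have hsplit := abs_weighted_sum_sub_le hw₀ (fun i => X i ω) (fun i => truncation (X i) A ω)
      (∫ x, X₀ x ∂μ) (∫ x, truncation X₀ A x ∂μ)
    linarith [hout.1, hout.2]
  calc _ ≤ 2 * τ / (ε / 2) + c * A ^ 2 / (ε / 2) ^ 2 :=
        (measureReal_mono hsub).trans <| (measureReal_union_le _ _).trans <| add_le_add
          (measureReal_weighted_sum_abs_sub_truncation_ge_le hident hint hw₀ hw₁ A (by positivity))
          (measureReal_abs_weighted_sum_truncation_sub_ge_le hindep hident hint hw₀ hwc hw₁ A
            (by positivity))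
    _ = 4 / ε * τ + 4 * c * A ^ 2 / ε ^ 2 := by field_simp; ring

end WeightedSums

theorem tendstoInMeasure_weighted_sum {Ω ι κ : Type*} {mΩ : MeasurableSpace Ω} {μ : Measure Ω}
    [IsProbabilityMeasure μ] {l : Filter ι} {s : ι → Finset κ} {w : ι → κ → ℝ} {c : ι → ℝ}
    {X : κ → Ω → ℝ} {X₀ : Ω → ℝ} (hindep : Pairwise fun k k' => X k ⟂ᵢ[μ] X k')
    (hident : ∀ k, IdentDistrib (X k) X₀ μ μ) (hint : Integrable X₀ μ)
    (hw₀ : ∀ i, ∀ k ∈ s i, 0 ≤ w i k) (hwc : ∀ i, ∀ k ∈ s i, w i k ≤ c i)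
    (hw₁ : ∀ i, ∑ k ∈ s i, w i k = 1) (hc : Tendsto c l (𝓝 0)) :
    TendstoInMeasure μ (fun i ω => ∑ k ∈ s i, w i k * X k ω) l (fun _ => ∫ x, X₀ x ∂μ) := by
  rw [tendstoInMeasure_iff_measureReal_dist]
  intro ε hε
  rw [Metric.tendsto_nhds]
  intro δ hδ
  have htail : Tendsto (fun A => 4 / ε * ∫ x, |X₀ x - truncation X₀ A x| ∂μ) atTop (𝓝 0) := by
    simpa using (tendsto_integral_abs_sub_truncation hint).const_mul (4 / ε)
  obtain ⟨A, hA⟩ := (htail.eventually (gt_mem_nhds (half_pos hδ))).exists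
  have hvar : Tendsto (fun i => 4 * c i * A ^ 2 / ε ^ 2) l (𝓝 0) := by
    simpa using ((hc.const_mul 4).mul_const (A ^ 2)).div_const (ε ^ 2)
  filter_upwards [hvar.eventually (gt_mem_nhds (half_pos hδ))] with i hi
  rw [Real.dist_eq, sub_zero, abs_of_nonneg measureReal_nonneg]
  simp only [Real.dist_eq]
  calc _ ≤ _ := measureReal_abs_weighted_sum_sub_integral_ge_le
        (fun k _ k' _ hkk' => hindep hkk') (fun k _ => hident k) hint (hw₀ i) (hwc i) (hw₁ i)
        A hε
    _ < δ := by linarith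

theorem cesaro_field_wlln_of_mean_general
    {Ω : Type*} [MeasureSpace Ω] [IsProbabilityMeasure (ℙ : Measure Ω)]
    (α β μ : ℝ) (hα0 : 0 < α) (hαβ : α ≤ β) (hβ1 : β ≤ 1)
    (X : ℕ × ℕ → Ω → ℝ) (X0 : Ω → ℝ)
    (hindep : iIndepFun X ℙ)
    (hident : ∀ kl, IdentDistrib (X kl) X0 ℙ ℙ)
    (hint : Integrable X0 ℙ) (hmean : ∫ ω, X0 ω ∂ℙ = μ) :
    TendstoInMeasure ℙ
      (fun mn : ℕ × ℕ => fun ω =>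
        (cesaroA α mn.1 * cesaroA β mn.2)⁻¹ *
          ∑ k ∈ Finset.range (mn.1 + 1), ∑ l ∈ Finset.range (mn.2 + 1),
            cesaroA (α - 1) (mn.1 - k) * cesaroA (β - 1) (mn.2 - l) * X (k, l) ω)
      atTop (fun _ => μ) := by
  have hβ0 : 0 < β := hα0.trans_le hαβ
  have hnorm : Tendsto (fun mn : ℕ × ℕ => (cesaroA α mn.1 * cesaroA β mn.2)⁻¹) atTop (𝓝 0) := by
    refine tendsto_inv_atTop_zero.comp ?_
    rw [← prod_atTop_atTop_eq]
    exact ((tendsto_cesaroA_atTop hα0).comp tendsto_fst).atTop_mul_atTop₀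
      ((tendsto_cesaroA_atTop hβ0).comp tendsto_snd)
  have hwlln := tendstoInMeasure_weighted_sum (l := atTop)
    (s := fun mn => range (mn.1 + 1) ×ˢ range (mn.2 + 1))
    (w := fun mn kl => cesaroWeight α mn.1 kl.1 * cesaroWeight β mn.2 kl.2)
    (fun _ _ h => hindep.indepFun h) hident hint
    (fun mn kl _ => mul_nonneg (cesaroWeight_nonneg hα0 _ _) (cesaroWeight_nonneg hβ0 _ _))
    (fun mn kl _ => by
      rw [mul_inv]
      exact mul_le_mul (cesaroWeight_le_inv hα0 _ (hαβ.trans hβ1) _)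
        (cesaroWeight_le_inv hβ0 _ hβ1 _) (cesaroWeight_nonneg hβ0 _ _)
        (inv_pos.2 (cesaroA_pos (by linarith) _)).le)
    (fun mn => by rw [sum_product, ← sum_mul_sum, sum_cesaroWeight hα0, sum_cesaroWeight hβ0,
      one_mul])
    hnorm
  refine hmean ▸ hwlln.congr_left fun mn => Eventually.of_forall fun ω => ?_
  simp only [sum_product, mul_sum, cesaroWeight]
  refine sum_congr rfl fun k _ => sum_congr rfl fun l _ => ?_
  ring

theorem cesaro_field_wlln_of_mean
    {Ω : Type*} [MeasureSpace Ω] [IsProbabilityMeasure (ℙ : Measure Ω)]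
    (α β μ : ℝ) (hα0 : 0 < α) (hαβ : α ≤ β) (hβ1 : β ≤ 1)
    (X : ℕ × ℕ → Ω → ℝ) (X0 : Ω → ℝ)
    (hmeas : ∀ kl, Measurable (X kl)) (hmeas0 : Measurable X0)
    (hindep : iIndepFun X ℙ)
    (hident : ∀ kl, IdentDistrib (X kl) X0 ℙ ℙ)
    (hweak : Tendsto (fun n : ℕ => (n : ℝ) * (ℙ {ω | (n : ℝ) < |X0 ω|}).toReal)
      atTop (𝓝 0))
    (hint : Integrable X0 ℙ) (hmean : ∫ ω, X0 ω ∂ℙ = μ) :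
    TendstoInMeasure ℙ
      (fun mn : ℕ × ℕ => fun ω =>
        (cesaroA α mn.1 * cesaroA β mn.2)⁻¹ *
          ∑ k ∈ Finset.range (mn.1 + 1), ∑ l ∈ Finset.range (mn.2 + 1),
            cesaroA (α - 1) (mn.1 - k) * cesaroA (β - 1) (mn.2 - l) * X (k, l) ω)
      atTop (fun _ => μ) :=
  cesaro_field_wlln_of_mean_general α β μ hα0 hαβ hβ1 X X0 hindep hident hint hmean
end

section
/- Let 0 < α ≤ β ≤ 1 and let X be a real random variable with n P(|X| > n) → 0 as n → ∞. For 1 ≤ k ≤ m and 1 ≤ l ≤ n set Y_{k,l}^{m,n} = k^{α-1} l^{β-1} X 1{k^{α-1} l^{β-1}|X| ≤ m^α n^β}. Then (1/(m^α n^β))^2 Σ_{k=1}^m Σ_{l=1}^n Var(Y_{k,l}^{m,n}) → 0 as m, n → ∞ (i.e., as min(m,n) → ∞). -/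
/-!
Write `g T = E[X² 1{|X| ≤ T}]`. Since `⌈|x|⌉² = ∑_{j < ⌈|x|⌉} (2j + 1)`, the layer-cake bound
`g T ≤ ∑_{j < ⌈T⌉} (2j + 1) P(|X| > j)` holds, and its summands tend to `0` because
`n P(|X| > n) → 0`; by Cesàro, `g T = o(T)`.
Each weight `c = k^(α-1) l^(β-1)` lies in `(0, 1]`, so with `M = m^α n^β` we get
`Var Y ≤ c² g(M / c) ≤ ε c M` once `M` is large, and
`∑ c ≤ M / (α β)` because `γ k^(γ-1) ≤ k^γ - (k - 1)^γ` (Bernoulli) telescopes.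
-/

open MeasureTheory ProbabilityTheory Filter Finset Topology Asymptotics

lemma isLittleO_sum_range_odd_mul_of_tendsto_mul {p : ℕ → ℝ}
    (hp : Tendsto (fun n : ℕ => (n : ℝ) * p n) atTop (𝓝 0)) :
    (fun N => ∑ j ∈ range N, (2 * (j : ℝ) + 1) * p j) =o[atTop] fun N => (N : ℝ) := by
  refine isLittleO_sum_range_of_tendsto_zero
    (squeeze_zero_norm' ?_ (by simpa using hp.norm.const_mul 3))
  filter_upwards [eventually_ge_atTop 1] with j hj
  have hj' : (1 : ℝ) ≤ j := by exact_mod_cast hj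
  rw [norm_mul, Real.norm_of_nonneg (by positivity), Real.norm_eq_abs]
  nlinarith [abs_nonneg (p j)]

lemma sq_le_sum_range_ceil_odd_ite {x T : ℝ} (hx : |x| ≤ T) :
    x ^ 2 ≤ ∑ j ∈ range ⌈T⌉₊, if (j : ℝ) < |x| then 2 * (j : ℝ) + 1 else 0 := by
  have hfilter : (range ⌈T⌉₊).filter (fun j : ℕ => (j : ℝ) < |x|) = range ⌈|x|⌉₊ := by
    ext j
    simp only [mem_filter, mem_range, Nat.lt_ceil]
    exact ⟨And.right, fun h => ⟨h.trans_le hx, h⟩⟩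
  have hodd (i : ℕ) : ∑ j ∈ range i, (2 * (j : ℝ) + 1) = (i : ℝ) ^ 2 := by
    induction i with
    | zero => simp
    | succ i ih => rw [sum_range_succ, ih]; push_cast; ring
  rw [← sum_filter, hfilter, hodd, ← sq_abs]
  exact pow_le_pow_left₀ (abs_nonneg x) (Nat.le_ceil _) 2

lemma mul_rpow_sub_one_le_rpow_sub_rpow {γ x : ℝ} (hγ0 : 0 ≤ γ) (hγ1 : γ ≤ 1) (hx : 1 ≤ x) :
    γ * x ^ (γ - 1) ≤ x ^ γ - (x - 1) ^ γ := by
  have hx0 : 0 < x := by linarith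
  have hinv : -1 ≤ -x⁻¹ := by simpa using inv_le_one_of_one_le₀ hx
  have hbernoulli := rpow_one_add_le_one_add_mul_self hinv hγ0 hγ1
  have hsplit : (x - 1) ^ γ = (1 + -x⁻¹) ^ γ * x ^ γ := by
    rw [← Real.mul_rpow (by linarith) hx0.le]
    congr 1
    field_simp
    ring
  rw [hsplit, Real.rpow_sub_one hx0.ne']
  have := mul_le_mul_of_nonneg_right hbernoulli (Real.rpow_nonneg hx0.le γ)
  linarith [show (1 + γ * -x⁻¹) * x ^ γ = x ^ γ - γ * (x ^ γ / x) by ring]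

lemma sum_Icc_rpow_sub_one_le {γ : ℝ} (hγ0 : 0 < γ) (hγ1 : γ ≤ 1) (m : ℕ) :
    ∑ k ∈ Icc 1 m, (k : ℝ) ^ (γ - 1) ≤ (m : ℝ) ^ γ / γ := by
  induction m with
  | zero => simp [Real.zero_rpow hγ0.ne']
  | succ m ih =>
    rw [sum_Icc_succ_top (by omega), le_div_iff₀ hγ0]
    rw [le_div_iff₀ hγ0] at ih
    have := mul_rpow_sub_one_le_rpow_sub_rpow hγ0.le hγ1 (x := ((m + 1 : ℕ) : ℝ)) (by simp)
    push_cast at this ⊢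
    simp only [add_sub_cancel_right] at this
    linarith

lemma sum_Icc_sum_Icc_rpow_mul_rpow_le {α β : ℝ} (hα0 : 0 < α) (hα1 : α ≤ 1) (hβ0 : 0 < β)
    (hβ1 : β ≤ 1) (m n : ℕ) :
    ∑ k ∈ Icc 1 m, ∑ l ∈ Icc 1 n, (k : ℝ) ^ (α - 1) * (l : ℝ) ^ (β - 1) ≤
      (m : ℝ) ^ α * (n : ℝ) ^ β / (α * β) := by
  rw [← sum_mul_sum]
  calc (∑ k ∈ Icc 1 m, (k : ℝ) ^ (α - 1)) * ∑ l ∈ Icc 1 n, (l : ℝ) ^ (β - 1)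
      ≤ (m : ℝ) ^ α / α * ((n : ℝ) ^ β / β) :=
        mul_le_mul (sum_Icc_rpow_sub_one_le hα0 hα1 m) (sum_Icc_rpow_sub_one_le hβ0 hβ1 n)
          (sum_nonneg fun _ _ => by positivity) (by positivity)
    _ = (m : ℝ) ^ α * (n : ℝ) ^ β / (α * β) := by ring

section TruncatedSecondMoment

variable {Ω : Type*} [MeasurableSpace Ω] {μ : Measure Ω} {X : Ω → ℝ}

lemma setIntegral_sq_le_sum_odd_mul_measureReal [IsFiniteMeasure μ] (hX : Measurable X)
    (T : ℝ) :
    ∫ ω in {ω | |X ω| ≤ T}, X ω ^ 2 ∂μ ≤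
      ∑ j ∈ range ⌈T⌉₊, (2 * (j : ℝ) + 1) * μ.real {ω | (j : ℝ) < |X ω|} := by
  have hmeas (j : ℕ) : MeasurableSet {ω | (j : ℝ) < |X ω|} :=
    measurableSet_lt measurable_const hX.abs
  calc ∫ ω in {ω | |X ω| ≤ T}, X ω ^ 2 ∂μ
      = ∫ ω, {ω | |X ω| ≤ T}.indicator (fun ω => X ω ^ 2) ω ∂μ :=
        (integral_indicator (measurableSet_le hX.abs measurable_const)).symm
    _ ≤ ∫ ω, ∑ j ∈ range ⌈T⌉₊,
          {ω | (j : ℝ) < |X ω|}.indicator (fun _ => 2 * (j : ℝ) + 1) ω ∂μ := by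
        refine integral_mono_of_nonneg
          (ae_of_all _ fun ω => Set.indicator_nonneg (fun _ _ => sq_nonneg _) _)
          (integrable_finsetSum _ fun j _ => (integrable_const _).indicator (hmeas j))
          (ae_of_all _ fun ω => ?_)
        simp only [Set.indicator_apply, Set.mem_ofPred_eq]
        split_ifs with h
        · exact sq_le_sum_range_ceil_odd_ite h
        · exact sum_nonneg fun j _ => by split_ifs <;> positivity
    _ = ∑ j ∈ range ⌈T⌉₊, (2 * (j : ℝ) + 1) * μ.real {ω | (j : ℝ) < |X ω|} := by
        rw [integral_finsetSum _ fun j _ => (integrable_const _).indicator (hmeas j)]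
        simp only [integral_indicator_const _ (hmeas _), smul_eq_mul, mul_comm]

lemma isLittleO_setIntegral_sq_of_tendsto_mul_measureReal [IsFiniteMeasure μ]
    (hX : Measurable X)
    (h : Tendsto (fun n : ℕ => (n : ℝ) * μ.real {ω | (n : ℝ) < |X ω|}) atTop (𝓝 0)) :
    (fun T => ∫ ω in {ω | |X ω| ≤ T}, X ω ^ 2 ∂μ) =o[atTop] fun T => T := by
  have hceil : (fun T : ℝ => (⌈T⌉₊ : ℝ)) =O[atTop] fun T => T := by
    refine IsBigO.of_bound 2 ?_
    filter_upwards [eventually_ge_atTop 1] with T hT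
    rw [Real.norm_natCast, Real.norm_of_nonneg (by linarith)]
    exact Nat.ceil_le_two_mul (by linarith)
  have hsum := (isLittleO_sum_range_odd_mul_of_tendsto_mul h).comp_tendsto
    (tendsto_nat_ceil_atTop (α := ℝ))
  refine (IsBigO.trans_isLittleO ?_ hsum).trans_isBigO hceil
  refine IsBigO.of_bound 1 (Eventually.of_forall fun T => ?_)
  rw [one_mul, Real.norm_of_nonneg (integral_nonneg fun _ => sq_nonneg _)]
  exact (setIntegral_sq_le_sum_odd_mul_measureReal hX T).trans (le_abs_self _)

lemma variance_truncate_mul_le [IsProbabilityMeasure μ] (hX : Measurable X) {c : ℝ}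
    (hc : 0 < c) (M : ℝ) :
    variance (fun ω => if c * |X ω| ≤ M then c * X ω else 0) μ ≤
      c ^ 2 * ∫ ω in {ω | |X ω| ≤ M / c}, X ω ^ 2 ∂μ := by
  have hset : {ω | |X ω| ≤ M / c} = {ω | c * |X ω| ≤ M} := by
    ext ω
    simp only [Set.mem_ofPred_eq, le_div_iff₀ hc, mul_comm]
  have hsq : (fun ω => if c * |X ω| ≤ M then c * X ω else 0) ^ 2 =
      fun ω => c ^ 2 * {ω | c * |X ω| ≤ M}.indicator (fun ω => X ω ^ 2) ω := by
    ext ω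
    simp only [Pi.pow_apply, Set.indicator_apply, Set.mem_ofPred_eq]
    split_ifs <;> ring
  have hmeas : MeasurableSet {ω | c * |X ω| ≤ M} :=
    measurableSet_le (hX.abs.const_mul c) measurable_const
  calc variance (fun ω => if c * |X ω| ≤ M then c * X ω else 0) μ
      ≤ μ[(fun ω => if c * |X ω| ≤ M then c * X ω else 0) ^ 2] :=
        variance_le_expectation_sq
          (Measurable.ite hmeas (hX.const_mul c) measurable_const).aestronglyMeasurable
    _ = c ^ 2 * ∫ ω in {ω | |X ω| ≤ M / c}, X ω ^ 2 ∂μ := by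
        rw [hsq, integral_const_mul, hset, integral_indicator hmeas]

lemma variance_truncate_mul_le_of_forall_ge [IsProbabilityMeasure μ] (hX : Measurable X)
    {c M ε : ℝ} (hc0 : 0 < c) (hc1 : c ≤ 1) (hM : 0 ≤ M)
    (hε : ∀ t ≥ M, ∫ ω in {ω | |X ω| ≤ t}, X ω ^ 2 ∂μ ≤ ε * t) :
    variance (fun ω => if c * |X ω| ≤ M then c * X ω else 0) μ ≤ ε * c * M := by
  calc variance (fun ω => if c * |X ω| ≤ M then c * X ω else 0) μ
      ≤ c ^ 2 * ∫ ω in {ω | |X ω| ≤ M / c}, X ω ^ 2 ∂μ := variance_truncate_mul_le hX hc0 M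
    _ ≤ c ^ 2 * (ε * (M / c)) :=
        mul_le_mul_of_nonneg_left (hε _ (le_div_self hM hc0 hc1)) (sq_nonneg c)
    _ = ε * c * M := by field_simp

lemma sum_variance_truncate_le [IsProbabilityMeasure μ] (hX : Measurable X) {α β ε M : ℝ}
    (hα0 : 0 < α) (hα1 : α ≤ 1) (hβ0 : 0 < β) (hβ1 : β ≤ 1) (hε0 : 0 ≤ ε) (hM : 0 ≤ M)
    (hε : ∀ t ≥ M, ∫ ω in {ω | |X ω| ≤ t}, X ω ^ 2 ∂μ ≤ ε * t) (m n : ℕ) :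
    ∑ k ∈ Icc 1 m, ∑ l ∈ Icc 1 n,
        variance (fun ω =>
          if (k : ℝ) ^ (α - 1) * (l : ℝ) ^ (β - 1) * |X ω| ≤ M then
            (k : ℝ) ^ (α - 1) * (l : ℝ) ^ (β - 1) * X ω
          else 0) μ ≤
      ε * M * ((m : ℝ) ^ α * (n : ℝ) ^ β / (α * β)) := by
  have hweight : ∀ k ∈ Icc 1 m, ∀ l ∈ Icc 1 n,
      0 < (k : ℝ) ^ (α - 1) * (l : ℝ) ^ (β - 1) ∧
        (k : ℝ) ^ (α - 1) * (l : ℝ) ^ (β - 1) ≤ 1 := by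
    intro k hk l hl
    have hk : (1 : ℝ) ≤ k := by exact_mod_cast (mem_Icc.1 hk).1
    have hl : (1 : ℝ) ≤ l := by exact_mod_cast (mem_Icc.1 hl).1
    exact ⟨by positivity, mul_le_one₀ (Real.rpow_le_one_of_one_le_of_nonpos hk (by linarith))
      (by positivity) (Real.rpow_le_one_of_one_le_of_nonpos hl (by linarith))⟩
  calc _ ≤ ∑ k ∈ Icc 1 m, ∑ l ∈ Icc 1 n, ε * ((k : ℝ) ^ (α - 1) * (l : ℝ) ^ (β - 1)) * M :=
        sum_le_sum fun k hk => sum_le_sum fun l hl =>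
          variance_truncate_mul_le_of_forall_ge hX (hweight k hk l hl).1 (hweight k hk l hl).2
            hM hε
    _ = ε * M * ∑ k ∈ Icc 1 m, ∑ l ∈ Icc 1 n, (k : ℝ) ^ (α - 1) * (l : ℝ) ^ (β - 1) := by
        simp only [mul_sum]
        exact sum_congr rfl fun _ _ => sum_congr rfl fun _ _ => by ring
    _ ≤ ε * M * ((m : ℝ) ^ α * (n : ℝ) ^ β / (α * β)) :=
        mul_le_mul_of_nonneg_left (sum_Icc_sum_Icc_rpow_mul_rpow_le hα0 hα1 hβ0 hβ1 m n)
          (mul_nonneg hε0 hM)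

end TruncatedSecondMoment

theorem truncated_variance_sum_tendsto_zero
    {Ω : Type*} [MeasureSpace Ω] [IsProbabilityMeasure (ℙ : Measure Ω)]
    (α β : ℝ) (hα0 : 0 < α) (hαβ : α ≤ β) (hβ1 : β ≤ 1)
    (X : Ω → ℝ) (hmeas : Measurable X)
    (hweak : Tendsto (fun n : ℕ => (n : ℝ) * (ℙ {ω | (n : ℝ) < |X ω|}).toReal)
      atTop (𝓝 0)) :
    Tendsto (fun mn : ℕ × ℕ =>
        (((mn.1 : ℝ) ^ α * (mn.2 : ℝ) ^ β)⁻¹) ^ 2 *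
          ∑ k ∈ Finset.Icc 1 mn.1, ∑ l ∈ Finset.Icc 1 mn.2,
            variance (fun ω =>
              if (k : ℝ) ^ (α - 1) * (l : ℝ) ^ (β - 1) * |X ω| ≤
                  (mn.1 : ℝ) ^ α * (mn.2 : ℝ) ^ β then
                (k : ℝ) ^ (α - 1) * (l : ℝ) ^ (β - 1) * X ω
              else 0) ℙ)
      atTop (𝓝 0) := by
  have hβ0 : 0 < β := hα0.trans_le hαβ
  have hα1 : α ≤ 1 := hαβ.trans hβ1
  have hsmall := isLittleO_setIntegral_sq_of_tendsto_mul_measureReal hmeas hweak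
  have hscale : Tendsto (fun mn : ℕ × ℕ => (mn.1 : ℝ) ^ α * (mn.2 : ℝ) ^ β) atTop atTop := by
    rw [← prod_atTop_atTop_eq]
    exact ((tendsto_rpow_atTop hα0).comp (tendsto_natCast_atTop_atTop.comp tendsto_fst))
      |>.atTop_mul_atTop₀ ((tendsto_rpow_atTop hβ0).comp
        (tendsto_natCast_atTop_atTop.comp tendsto_snd))
  refine tendsto_order.2 ⟨fun a ha => Eventually.of_forall fun _ => ha.trans_le <|
    mul_nonneg (sq_nonneg _) (sum_nonneg fun _ _ => sum_nonneg fun _ _ => variance_nonneg _ _),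
    fun ε hε => ?_⟩
  obtain ⟨T₀, hT₀⟩ := eventually_atTop.1 (hsmall.bound (show 0 < ε * (α * β) / 2 by positivity))
  filter_upwards [hscale.eventually_ge_atTop (max T₀ 1)] with ⟨m, n⟩ hM
  obtain ⟨hT₀M, hM1⟩ : T₀ ≤ (m : ℝ) ^ α * (n : ℝ) ^ β ∧ 1 ≤ (m : ℝ) ^ α * (n : ℝ) ^ β :=
    max_le_iff.1 hM
  set M := (m : ℝ) ^ α * (n : ℝ) ^ β
  have hε' : ∀ t ≥ M, ∫ ω in {ω | |X ω| ≤ t}, X ω ^ 2 ∂ℙ ≤ ε * (α * β) / 2 * t := fun t ht => by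
    have := hT₀ t (hT₀M.trans ht)
    rwa [Real.norm_of_nonneg (integral_nonneg fun _ => sq_nonneg _),
      Real.norm_of_nonneg (by linarith)] at this
  calc _ ≤ (M⁻¹) ^ 2 * (ε * (α * β) / 2 * M * (M / (α * β))) :=
        mul_le_mul_of_nonneg_left (sum_variance_truncate_le hmeas hα0 hα1 hβ0 hβ1 (by positivity)
          (by linarith) hε' m n) (sq_nonneg _)
    _ = ε / 2 := by field_simp [(zero_lt_one.trans_le hM1).ne']
    _ < ε := half_lt_self hε
end
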